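/- Let c = f^ω(0) be the Chacon word, where f : 0 ↦ 0010, 1 ↦ 1, and let ρ be the order 0 < 1. Then the lexicographically least word in the shift orbit closure of c beginning with 0 is 0·c, and the lexicographically least word beginning with 1 is 10·c. -/

import Mathlib

/-- The prefix of length `n` of an infinite word. -/
def wordPrefix {A : Type*} (x : ℕ → A) (n : ℕ) : List A :=
  List.ofFn (fun i : Fin n => x i)

/-- A finite word is a prefix of an infinite word. -/
def IsPrefixOfWord {A : Type*} (w : List A) (x : ℕ → A) : Prop :=
  wordPrefix x w.length = w

/-- A finite word is a factor of an infinite word. -/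
def IsFactor {A : Type*} (w : List A) (x : ℕ → A) : Prop :=
  ∃ i, w = List.ofFn (fun j : Fin w.length => x (i + j))

/-- `y` belongs to the shift orbit closure of `x`. -/
def InOrbitClosure {A : Type*} (y x : ℕ → A) : Prop :=
  ∀ w, IsFactor w y → IsFactor w x

/-- A morphism `A* → B*` applied to a finite word. -/
def applyMorphism {A B : Type*} (f : A → List B) (w : List A) : List B :=
  w.flatMap f

/-- The `n`-th iterate of a morphism applied to a finite word. -/
def applyIter {A : Type*} (f : A → List A) (n : ℕ) (w : List A) : List A :=
  (applyMorphism f)^[n] w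

/-- `y = f(x)` for infinite words: every image of a prefix of `x` is a prefix of `y`. -/
def IsWordImage {A B : Type*} (f : A → List B) (x : ℕ → A) (y : ℕ → B) : Prop :=
  ∀ n, IsPrefixOfWord (applyMorphism f (wordPrefix x n)) y

/-- Prepend a finite word to an infinite word. -/
def prepend {A : Type*} (w : List A) (x : ℕ → A) : ℕ → A :=
  fun n => if h : n < w.length then w.get ⟨n, h⟩ else x (n - w.length)

/-- Strict lexicographic order on infinite words induced by the order `r` on letters. -/
def LexLt {A : Type*} (r : A → A → Prop) (x y : ℕ → A) : Prop :=
  ∃ n, (∀ i, i < n → x i = y i) ∧ r (x n) (y n)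

def LexLe {A : Type*} (r : A → A → Prop) (x y : ℕ → A) : Prop :=
  LexLt r x y ∨ x = y

/-- `l` is the lexicographically least word (w.r.t. `r`) in the shift orbit closure
of `x` beginning with the letter `a`. -/
def IsLeastWord {A : Type*} (r : A → A → Prop) (x : ℕ → A) (a : A) (l : ℕ → A) : Prop :=
  InOrbitClosure l x ∧ l 0 = a ∧ ∀ y, InOrbitClosure y x → y 0 = a → LexLe r l y

/-- `f` is prolongable on `a` (and generates an infinite word from `a`). -/
def IsGenerating {A : Type*} (f : A → List A) (a : A) : Prop :=
  ∃ s, f a = a :: s ∧ s ≠ [] ∧ ∀ n, applyIter f n s ≠ []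

/-- `x` is the pure morphic word `f^ω(a)`. -/
def IsPureMorphic {A : Type*} (f : A → List A) (a : A) (x : ℕ → A) : Prop :=
  x 0 = a ∧ IsGenerating f a ∧ IsWordImage f x x

/-- `x` is a morphic word: the image under a coding of a pure morphic word. -/
def IsMorphic {B : Type*} (x : ℕ → B) : Prop :=
  ∃ (k : ℕ) (g : Fin k → List (Fin k)) (b : Fin k) (c : Fin k → B) (t : ℕ → Fin k),
    IsPureMorphic g b t ∧ x = c ∘ t

/-- `f ∈ M_x`: each letter `b` has a nonempty "marker" word `p b` such that `f(y)`
begins with `p b` whenever `y ∈ S_x` begins with `b`, and the markers of distinct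
letters are prefix-incomparable. -/
def MemM {A B : Type*} (f : A → List B) (x : ℕ → A) : Prop :=
  ∃ p : A → List B, (∀ b, p b ≠ []) ∧
    (∀ (b : A) (y : ℕ → A), InOrbitClosure y x → y 0 = b →
      ∃ n, p b <+: applyMorphism f (wordPrefix y n)) ∧
    (∀ a b : A, a ≠ b → ¬ p a <+: p b ∧ ¬ p b <+: p a)

/-- Every factor occurs infinitely often. -/
def Recurrent {A : Type*} (x : ℕ → A) : Prop :=
  ∀ w, IsFactor w x → ∀ N, ∃ i, N ≤ i ∧ w = List.ofFn (fun j : Fin w.length => x (i + j))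

/-- Ultimately periodic infinite word. -/
def UltimatelyPeriodic {A : Type*} (x : ℕ → A) : Prop :=
  ∃ N p, 0 < p ∧ ∀ n, N ≤ n → x (n + p) = x n

/-- The period-doubling morphism `0 ↦ 01`, `1 ↦ 00`. -/
def pdMorph : Bool → List Bool := fun b => if b then [false, false] else [false, true]

/-- The morphism `0 ↦ 0001`, `1 ↦ 0101`. -/
def gMorph : Bool → List Bool :=
  fun b => if b then [false, true, false, true] else [false, false, false, true]

/-- The Chacon morphism `0 ↦ 0010`, `1 ↦ 1`. -/
def chMorph : Bool → List Bool := fun b => if b then [true] else [false, false, true, false]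

/-- The Rudin–Shapiro morphism `0 ↦ 01`, `1 ↦ 02`, `2 ↦ 31`, `3 ↦ 32`. -/
def rsMorph : Fin 4 → List (Fin 4) := ![[0, 1], [0, 2], [3, 1], [3, 2]]

/-- The Rudin–Shapiro coding `0 ↦ 0`, `1 ↦ 0`, `2 ↦ 1`, `3 ↦ 1`. -/
def rsCoding : Fin 4 → Bool := ![false, false, true, true]

/-- The 2-bit binary representation morphism `0 ↦ 00`, `1 ↦ 01`, `2 ↦ 10`, `3 ↦ 11`. -/
def hMorph : Fin 4 → List Bool := ![[false, false], [false, true], [true, false], [true, true]]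

/-!
The Chacon morphism maps each letter to a word beginning with that letter, so `c` is cut into
blocks `f(c j)`, starting at the positions `|f(c[0, j))|`, and occurrences aligned with the blocks
can be desubstituted. The key fact is that `0 · c[0, k) · 0` is not a factor of `c` when
`c k = 1`: such an occurrence begins with `000`, which forces it to be aligned with the blocks,
and desubstituting it gives either a shorter occurrence of the same kind or a block `0010` with a
`0` in place of its `1`. So no word of the orbit closure is smaller than `0 · c` at their first
difference, and dropping the leading `1` reduces the case of `10 · c` to that of `0 · c`.
Conversely, applying `f` to an occurrence of `0 · c[0, m)` gives an occurrence of
`0010 · c[0, |f(c[0, m))|)`, so every prefix of `0 · c` and of `10 · c` is a factor of `c`.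
-/

section Words

variable {A : Type*}

@[simp]
lemma wordPrefix_length (x : ℕ → A) (n : ℕ) : (wordPrefix x n).length = n := by
  simp [wordPrefix]

lemma wordPrefix_succ (x : ℕ → A) (n : ℕ) :
    wordPrefix x (n + 1) = wordPrefix x n ++ [x n] := by
  simp only [wordPrefix, List.ofFn_succ', List.concat_eq_append, Fin.val_castSucc, Fin.val_last]

lemma isFactor_iff {w : List A} {x : ℕ → A} :
    IsFactor w x ↔ ∃ i, ∀ s (hs : s < w.length), w[s] = x (i + s) := by
  refine exists_congr fun i => ⟨fun h s hs => ?_, fun h => List.ext_getElem (by simp) ?_⟩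
  · simp [List.getElem_of_eq h hs]
  · intro s hs _
    simp [h s hs]

lemma inOrbitClosure_iff {y x : ℕ → A} :
    InOrbitClosure y x ↔ ∀ m, ∃ i, ∀ s < m, y s = x (i + s) := by
  constructor
  · intro h m
    have hy : IsFactor (wordPrefix y m) y := isFactor_iff.2 ⟨0, by simp [wordPrefix]⟩
    obtain ⟨i, hi⟩ := isFactor_iff.1 (h _ hy)
    exact ⟨i, fun s hs => by simpa [wordPrefix] using hi s (by simpa using hs)⟩
  · intro h w hw
    obtain ⟨p, hp⟩ := isFactor_iff.1 hw
    obtain ⟨i, hi⟩ := h (p + w.length)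
    exact isFactor_iff.2 ⟨i + p, fun s hs => by rw [hp s hs, hi _ (by omega), Nat.add_assoc]⟩

lemma InOrbitClosure.tail {y x : ℕ → A} (h : InOrbitClosure y x) :
    InOrbitClosure (fun n => y (n + 1)) x := by
  rw [inOrbitClosure_iff] at h ⊢
  intro m
  obtain ⟨i, hi⟩ := h (m + 1)
  exact ⟨i + 1, fun s hs => by rw [hi _ (by omega)]; ring_nf⟩

@[simp]
lemma prepend_cons_zero (a : A) (w : List A) (x : ℕ → A) : prepend (a :: w) x 0 = a := by
  simp [prepend]

@[simp]
lemma prepend_cons_succ (a : A) (w : List A) (x : ℕ → A) (n : ℕ) :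
    prepend (a :: w) x (n + 1) = prepend w x n := by
  simp [prepend]

@[simp]
lemma prepend_nil (x : ℕ → A) : prepend [] x = x := by
  funext n
  simp [prepend]

lemma LexLt.tail {r : A → A → Prop} {a : A} {w : List A} {y z : ℕ → A}
    (h : LexLt r y (prepend (a :: w) z)) (hy : y 0 = a) (hr : ¬ r a a) :
    LexLt r (fun n => y (n + 1)) (prepend w z) := by
  obtain ⟨_ | n, hagree, hlt⟩ := h
  · exact absurd (by simpa [hy] using hlt) hr
  · exact ⟨n, fun i hi => by simpa using hagree (i + 1) (by omega), by simpa using hlt⟩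

lemma lexLe_or_lexLt [LinearOrder A] (x y : ℕ → A) :
    LexLe (· < ·) x y ∨ LexLt (· < ·) y x := by
  by_cases hxy : x = y
  · exact Or.inl (Or.inr hxy)
  classical
  have hne : ∃ n, x n ≠ y n := Function.ne_iff.1 hxy
  have hagree : ∀ i < Nat.find hne, x i = y i := fun i hi => not_not.1 (Nat.find_min hne hi)
  rcases (Nat.find_spec hne).lt_or_gt with hlt | hlt
  · exact Or.inl (Or.inl ⟨_, hagree, hlt⟩)
  · exact Or.inr ⟨_, fun i hi => (hagree i hi).symm, hlt⟩

lemma isLeastWord_of_forall_not_lexLt [LinearOrder A] {x l : ℕ → A} {a : A}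
    (hl : InOrbitClosure l x) (hl0 : l 0 = a)
    (h : ∀ y, InOrbitClosure y x → y 0 = a → ¬ LexLt (· < ·) y l) :
    IsLeastWord (· < ·) x a l :=
  ⟨hl, hl0, fun y hy hy0 => (lexLe_or_lexLt l y).resolve_right (h y hy hy0)⟩

end Words

section MorphicFixedPoint

variable {A : Type*} {f : A → List A} {x : ℕ → A}

def blockStart (f : A → List A) (x : ℕ → A) (j : ℕ) : ℕ :=
  (applyMorphism f (wordPrefix x j)).length

@[simp]
lemma blockStart_zero : blockStart f x 0 = 0 := by
  simp [blockStart, wordPrefix, applyMorphism]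

lemma blockStart_succ (j : ℕ) : blockStart f x (j + 1) = blockStart f x j + (f (x j)).length := by
  simp [blockStart, wordPrefix_succ, applyMorphism]

lemma apply_blockStart_add (hx : IsWordImage f x x) {j t : ℕ} (ht : t < (f (x j)).length) :
    x (blockStart f x j + t) = (f (x j))[t] := by
  have hpre : wordPrefix x (blockStart f x (j + 1)) =
      applyMorphism f (wordPrefix x j) ++ f (x j) := by
    refine (hx (j + 1)).trans ?_
    simp [applyMorphism, wordPrefix_succ]
  have hlt : blockStart f x j + t < (wordPrefix x (blockStart f x (j + 1))).length := by
    simp [blockStart_succ, ht]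
  have := List.getElem_of_eq hpre hlt
  simpa [wordPrefix, List.getElem_append_right, blockStart] using this

lemma exists_eq_blockStart_add (hf : ∀ a, f a ≠ []) (i : ℕ) :
    ∃ j t, i = blockStart f x j + t ∧ t < (f (x j)).length := by
  induction i with
  | zero => exact ⟨0, 0, by simp, List.length_pos_iff.2 (hf _)⟩
  | succ i ih =>
    obtain ⟨j, t, rfl, ht⟩ := ih
    by_cases h : t + 1 < (f (x j)).length
    · exact ⟨j, t + 1, rfl, h⟩
    · exact ⟨j + 1, 0, by rw [blockStart_succ]; omega, List.length_pos_iff.2 (hf _)⟩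

lemma blockStart_add_le (hf : ∀ a, f a ≠ []) (j m : ℕ) :
    blockStart f x j + m ≤ blockStart f x (j + m) := by
  induction m with
  | zero => rfl
  | succ m ih =>
    have := List.length_pos_iff.2 (hf (x (j + m)))
    rw [show j + (m + 1) = j + m + 1 by omega, blockStart_succ]
    omega

lemma apply_blockStart (hx : IsWordImage f x x) (hf : ∀ a, (f a).head? = some a) (j : ℕ) :
    x (blockStart f x j) = x j := by
  obtain ⟨l, hl⟩ := List.head?_eq_some_iff.1 (hf (x j))
  simpa [hl] using apply_blockStart_add hx (j := j) (t := 0) (by simp [hl])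

lemma blockStart_agree_of_agree (hx : IsWordImage f x x) :
    ∀ m j k, (∀ t < m, x (j + t) = x (k + t)) →
    ∃ d, blockStart f x (j + m) = blockStart f x j + d ∧
      blockStart f x (k + m) = blockStart f x k + d ∧
      ∀ t < d, x (blockStart f x j + t) = x (blockStart f x k + t) := by
  intro m
  induction m with
  | zero => exact fun j k _ => ⟨0, rfl, rfl, fun t ht => absurd ht (Nat.not_lt_zero t)⟩
  | succ m ih =>
    intro j k hjk
    have h0 : x j = x k := by simpa using hjk 0 (by omega)
    obtain ⟨d, hdj, hdk, hd⟩ := ih (j + 1) (k + 1) fun t ht => by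
      simpa [Nat.add_assoc, Nat.add_comm 1 t] using hjk (t + 1) (by omega)
    set L := (f (x k)).length
    have hj : blockStart f x (j + 1) = blockStart f x j + L := by rw [blockStart_succ, h0]
    have hk : blockStart f x (k + 1) = blockStart f x k + L := blockStart_succ k
    refine ⟨L + d, by rw [show j + (m + 1) = j + 1 + m by omega, hdj, hj]; omega,
      by rw [show k + (m + 1) = k + 1 + m by omega, hdk, hk]; omega, fun t ht => ?_⟩
    by_cases htL : t < L
    · rw [apply_blockStart_add hx (h0 ▸ htL), apply_blockStart_add hx htL]
      simp only [h0]
    · have := hd (t - L) (by omega)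
      rwa [hj, hk, Nat.add_assoc, Nat.add_assoc, Nat.add_sub_cancel' (by omega)] at this

-- Desubstitution: an aligned occurrence of the image of `x[k, k + m)` is the image of
-- `x[j, j + m)`.
lemma agree_of_blockStart_agree (hx : IsWordImage f x x) (hf : ∀ a, (f a).head? = some a) :
    ∀ m j k d, blockStart f x (k + m) = blockStart f x k + d →
    (∀ t < d, x (blockStart f x j + t) = x (blockStart f x k + t)) →
    (∀ t < m, x (j + t) = x (k + t)) ∧ blockStart f x (j + m) = blockStart f x j + d := by
  have hne : ∀ a, f a ≠ [] := fun a h => by simpa [h] using hf a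
  intro m
  induction m with
  | zero => intro j k d hd _; exact ⟨fun t ht => absurd ht (Nat.not_lt_zero t), by simp_all⟩
  | succ m ih =>
    intro j k d hd hjk
    set L := (f (x k)).length
    have hk : blockStart f x (k + 1) = blockStart f x k + L := blockStart_succ k
    have hLd : L ≤ d := by
      have := blockStart_add_le (x := x) hne (k + 1) m
      rw [show k + 1 + m = k + (m + 1) by omega, hd, hk] at this
      omega
    have hLpos : 0 < L := List.length_pos_iff.2 (hne _)
    have h0 : x j = x k := by
      simpa [apply_blockStart hx hf] using hjk 0 (by omega)
    have hj : blockStart f x (j + 1) = blockStart f x j + L := by rw [blockStart_succ, h0]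
    obtain ⟨hagree, hend⟩ := ih (j + 1) (k + 1) (d - L)
      (by rw [show k + 1 + m = k + (m + 1) by omega, hd, hk]; omega)
      fun t ht => by simpa [hj, hk, Nat.add_assoc] using hjk (L + t) (by omega)
    refine ⟨fun t ht => ?_, by rw [show j + (m + 1) = j + 1 + m by omega, hend, hj]; omega⟩
    rcases t with _ | t
    · simpa using h0
    · simpa [Nat.add_assoc, Nat.add_comm 1 t] using hagree t (by omega)

end MorphicFixedPoint

section Chacon

variable {c : ℕ → Bool}

lemma chMorph_head (a : Bool) : (chMorph a).head? = some a := by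
  cases a <;> rfl

lemma chMorph_ne_nil (a : Bool) : chMorph a ≠ [] := by
  cases a <;> simp [chMorph]

lemma blockStart_chMorph_succ_of_false {j : ℕ} (hj : c j = false) :
    blockStart chMorph c (j + 1) = blockStart chMorph c j + 4 := by
  simp [blockStart_succ, hj, chMorph]

lemma chacon_block_of_false (hc : IsPureMorphic chMorph false c) {j : ℕ} (hj : c j = false) :
    c (blockStart chMorph c j) = false ∧ c (blockStart chMorph c j + 1) = false ∧
      c (blockStart chMorph c j + 2) = true ∧ c (blockStart chMorph c j + 3) = false := by
  have h (t : ℕ) (ht : t < 4) :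
      c (blockStart chMorph c j + t) = [false, false, true, false][t] := by
    simpa [hj, chMorph] using
      apply_blockStart_add hc.2.2 (j := j) (t := t) (by simp [hj, chMorph, ht])
  exact ⟨h 0 (by omega), h 1 (by omega), h 2 (by omega), h 3 (by omega)⟩

lemma chacon_prefix (hc : IsPureMorphic chMorph false c) :
    c 0 = false ∧ c 1 = false ∧ c 2 = true ∧ c 3 = false := by
  simpa using chacon_block_of_false hc (j := 0) hc.1

lemma lt_blockStart_chMorph (hc : IsPureMorphic chMorph false c) {m : ℕ} (hm : 0 < m) :
    m < blockStart chMorph c m := by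
  have h := blockStart_add_le (x := c) chMorph_ne_nil 1 (m - 1)
  rw [blockStart_chMorph_succ_of_false hc.1, blockStart_zero, Nat.add_sub_cancel' hm] at h
  omega

-- `000` can only straddle a block boundary `0010 | 00`.
lemma exists_blockStart_eq_of_triple_false (hc : IsPureMorphic chMorph false c) {i : ℕ}
    (h0 : c i = false) (h1 : c (i + 1) = false) (h2 : c (i + 2) = false) :
    ∃ j, c j = false ∧ blockStart chMorph c (j + 1) = i + 1 := by
  obtain ⟨j, t, rfl, ht⟩ := exists_eq_blockStart_add (x := c) chMorph_ne_nil i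
  cases hj : c j
  · obtain ⟨-, b1, b2, -⟩ := chacon_block_of_false hc hj
    simp only [hj, chMorph, Bool.false_eq_true, ↓reduceIte, List.length_cons,
      List.length_nil] at ht
    interval_cases t
    · simp_all
    · simp_all
    · simp_all
    · exact ⟨j, hj, by rw [blockStart_chMorph_succ_of_false hj]⟩
  · simp only [hj, chMorph, ↓reduceIte, List.length_cons, List.length_nil] at ht
    obtain rfl : t = 0 := by omega
    simp_all [apply_blockStart hc.2.2 chMorph_head]

lemma chacon_eq_true_after_false_prefix (hc : IsPureMorphic chMorph false c) {k : ℕ} :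
    ∀ {i}, c k = true → c i = false → (∀ t < k, c (i + 1 + t) = c t) →
      c (i + 1 + k) = true := by
  induction k using Nat.strong_induction_on with
  | _ k ih =>
  intro i hk hi hpre
  by_contra hend
  rw [Bool.not_eq_true] at hend
  obtain ⟨c0, c1, -, -⟩ := chacon_prefix hc
  have hk2 : 2 ≤ k := by
    by_contra
    interval_cases k <;> simp_all
  -- the occurrence is aligned with the blocks, so it desubstitutes to a shorter one
  obtain ⟨j, hj, hji⟩ := exists_blockStart_eq_of_triple_false hc hi
    (by simpa [c0] using hpre 0 (by omega)) (by simpa [c1] using hpre 1 (by omega))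
  obtain ⟨m, t, hkm, ht⟩ := exists_eq_blockStart_add (x := c) chMorph_ne_nil k
  obtain ⟨hagree, hlen⟩ := agree_of_blockStart_agree hc.2.2 chMorph_head m (j + 1) 0
    (blockStart chMorph c m) (by simp) fun t ht' => by rw [hji]; simpa using hpre t (by omega)
  simp only [Nat.zero_add] at hagree
  rw [hji] at hlen
  cases hcm : c m
  · obtain ⟨b0, b1, -, b3⟩ := chacon_block_of_false hc hcm
    simp only [hcm, chMorph, Bool.false_eq_true, ↓reduceIte, List.length_cons,
      List.length_nil] at ht
    have ht2 : t = 2 := by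
      interval_cases t <;> simp_all
    have hjm : c (j + 1 + m) = false := by
      rw [← apply_blockStart hc.2.2 chMorph_head, hlen, hpre _ (by omega), b0]
    have := (chacon_block_of_false hc hjm).2.2.1
    rw [hlen, show i + 1 + blockStart chMorph c m + 2 = i + 1 + k by omega, hend] at this
    exact Bool.false_ne_true this
  · simp only [hcm, chMorph, ↓reduceIte, List.length_cons, List.length_nil] at ht
    obtain rfl : t = 0 := by omega
    have hm : 0 < m := by
      by_contra
      simp_all
    have := ih m (by have := lt_blockStart_chMorph hc hm; omega) hcm hj hagree
    rw [← apply_blockStart hc.2.2 chMorph_head, hlen, ← Nat.add_zero (blockStart _ _ m),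
      ← hkm, hend] at this
    exact Bool.false_ne_true this

lemma chacon_factor_step (hc : IsPureMorphic chMorph false c) {i m : ℕ} (hi : c i = false)
    (hpre : ∀ t < m, c (i + 1 + t) = c t) :
    c (blockStart chMorph c i + 2) = true ∧ c (blockStart chMorph c i + 3) = false ∧
      ∀ t < blockStart chMorph c m, c (blockStart chMorph c i + 4 + t) = c t := by
  obtain ⟨-, -, b2, b3⟩ := chacon_block_of_false hc hi
  obtain ⟨d, -, hd, hagree⟩ :=
    blockStart_agree_of_agree hc.2.2 m (i + 1) 0 (by simpa using hpre)
  simp only [Nat.zero_add, blockStart_zero] at hd hagree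
  subst hd
  refine ⟨b2, b3, fun t ht => ?_⟩
  simpa [blockStart_chMorph_succ_of_false hi] using hagree t ht

lemma exists_false_prefix (hc : IsPureMorphic chMorph false c) (m : ℕ) :
    ∃ i, c i = false ∧ ∀ t < m, c (i + 1 + t) = c t := by
  suffices ∀ m, ∃ i, c i = false ∧ ∀ t < m + 1, c (i + 1 + t) = c t by
    obtain ⟨i, hi, hpre⟩ := this m
    exact ⟨i, hi, fun t ht => hpre t (by omega)⟩
  obtain ⟨c0, c1, -, -⟩ := chacon_prefix hc
  intro m
  induction m with
  | zero => exact ⟨0, c0, fun t ht => by simp_all⟩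
  | succ m ih =>
    obtain ⟨i, hi, hpre⟩ := ih
    obtain ⟨-, b3, hstep⟩ := chacon_factor_step hc hi hpre
    have := lt_blockStart_chMorph hc (Nat.add_one_pos m)
    exact ⟨blockStart chMorph c i + 3, b3, fun t ht => hstep t (by omega)⟩

lemma inOrbitClosure_prepend_false (hc : IsPureMorphic chMorph false c) :
    InOrbitClosure (prepend [false] c) c := by
  refine inOrbitClosure_iff.2 fun m => ?_
  obtain ⟨i, hi, hpre⟩ := exists_false_prefix hc m
  refine ⟨i, fun s hs => ?_⟩
  rcases s with _ | t
  · simpa using hi.symm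
  · simpa [show i + (t + 1) = i + 1 + t by omega] using (hpre t (by omega)).symm

lemma inOrbitClosure_prepend_true_false (hc : IsPureMorphic chMorph false c) :
    InOrbitClosure (prepend [true, false] c) c := by
  refine inOrbitClosure_iff.2 fun m => ?_
  obtain ⟨i, hi, hpre⟩ := exists_false_prefix hc m
  obtain ⟨b2, b3, hstep⟩ := chacon_factor_step hc hi hpre
  have hm := blockStart_add_le (x := c) chMorph_ne_nil 0 m
  refine ⟨blockStart chMorph c i + 2, fun s hs => ?_⟩
  rcases s with _ | _ | t
  · simpa using b2.symm
  · simpa using b3.symm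
  · rw [prepend_cons_succ, prepend_cons_succ, prepend_nil,
      show blockStart chMorph c i + 2 + (t + 1 + 1) = blockStart chMorph c i + 4 + t by omega]
    exact (hstep t (by simp at hm; omega)).symm

lemma not_lexLt_prepend_false (hc : IsPureMorphic chMorph false c) {y : ℕ → Bool}
    (hy : InOrbitClosure y c) : ¬ LexLt (· < ·) y (prepend [false] c) := by
  rintro ⟨_ | k, hagree, hlt⟩
  · simp [Bool.lt_iff] at hlt
  simp only [prepend_cons_succ, prepend_nil, Bool.lt_iff] at hlt
  obtain ⟨i, hi⟩ := inOrbitClosure_iff.1 hy (k + 2)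
  have := chacon_eq_true_after_false_prefix hc (i := i) hlt.2
    (by simpa using (hi 0 (by omega)).symm.trans (hagree 0 (by omega)))
    fun t ht => by
      rw [show i + 1 + t = i + (t + 1) by omega]
      simpa using (hi (t + 1) (by omega)).symm.trans (hagree (t + 1) (by omega))
  rw [show i + 1 + k = i + (k + 1) by omega, ← hi (k + 1) (by omega), hlt.1] at this
  exact Bool.false_ne_true this

end Chacon

theorem stmt13 (c : ℕ → Bool) (hc : IsPureMorphic chMorph false c) :
    IsLeastWord (· < ·) c false (prepend [false] c) ∧
    IsLeastWord (· < ·) c true (prepend [true, false] c) :=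
  ⟨isLeastWord_of_forall_not_lexLt (inOrbitClosure_prepend_false hc) rfl
      fun _ hy _ => not_lexLt_prepend_false hc hy,
    isLeastWord_of_forall_not_lexLt (inOrbitClosure_prepend_true_false hc) rfl
      fun _ hy hy0 hlt =>
        not_lexLt_prepend_false hc hy.tail (hlt.tail hy0 (lt_irrefl true))⟩
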